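/- Let A : ℝ^m →ₗ ℝ^n be a linear map, d ∈ ℝ^n, and η₁,…,η_N ∈ ℝ^m. The minimizer set of q ↦ (1/N) ∑_{s=1}^N ‖d - A(q + η_s)‖² equals the minimizer set of q ↦ ‖d - A(q + η̄)‖², where η̄ = (1/N) ∑_s η_s is the sample mean. In particular, for a linear forward operator the single-sample point estimate with the mean noise and the multi-sample averaged misfit estimate coincide. -/

import Mathlib

/-!
Expanding `‖x - wₛ‖² = ‖(x - μ) + (μ - wₛ)‖²` around the mean `μ`, the cross terms cancel because the
deviations `μ - wₛ` sum to zero, so `∑ₛ ‖x - wₛ‖² = N ‖x - μ‖² + ∑ₛ ‖μ - wₛ‖²`. Taking `x = d - A q` and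
`wₛ = A ηₛ`, linearity of `A` turns `μ` into `A η̄`: the averaged misfit is the misfit at the mean noise
plus a constant independent of `q`, hence both have the same minimizers.
-/

open Finset

theorem sum_mean_sub_eq_zero {ι E : Type*} [Fintype ι] [Nonempty ι] [AddCommGroup E] [Module ℝ E]
    (w : ι → E) : ∑ i, ((Fintype.card ι : ℝ)⁻¹ • ∑ j, w j - w i) = 0 := by
  rw [sum_sub_distrib, sum_const, card_univ, ← Nat.cast_smul_eq_nsmul ℝ,
    smul_inv_smul₀ (by positivity), sub_self]

theorem sum_norm_sub_sq_eq_card_mul_add {ι E : Type*} [Fintype ι] [Nonempty ι]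
    [NormedAddCommGroup E] [InnerProductSpace ℝ E] (x : E) (w : ι → E) :
    ∑ i, ‖x - w i‖ ^ 2 =
      Fintype.card ι * ‖x - (Fintype.card ι : ℝ)⁻¹ • ∑ j, w j‖ ^ 2 +
        ∑ i, ‖(Fintype.card ι : ℝ)⁻¹ • ∑ j, w j - w i‖ ^ 2 := by
  set μ := (Fintype.card ι : ℝ)⁻¹ • ∑ j, w j
  have hsplit : ∀ i, x - w i = (x - μ) + (μ - w i) := fun i => by abel
  have hdev : ∑ i, (μ - w i) = 0 := sum_mean_sub_eq_zero w
  simp_rw [hsplit, norm_add_sq_real, sum_add_distrib]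
  rw [← mul_sum, ← inner_sum, hdev, inner_zero_right, mul_zero, add_zero, sum_const, card_univ,
    nsmul_eq_mul]

theorem setOf_forall_le_eq_of_eq_add_const {α β : Type*} [Add β] [LE β] [AddRightMono β]
    [AddRightReflectLE β] {f g : α → β} {c : β} (h : ∀ x, f x = g x + c) :
    {x | ∀ y, f x ≤ f y} = {x | ∀ y, g x ≤ g y} := by
  simp only [h, add_le_add_iff_right]

theorem inv_card_mul_sum_norm_sub_map_add_sq {ι E F : Type*} [Fintype ι] [Nonempty ι]
    [AddCommGroup E] [Module ℝ E] [NormedAddCommGroup F] [InnerProductSpace ℝ F]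
    (A : E →ₗ[ℝ] F) (d : F) (q : E) (η : ι → E) :
    (Fintype.card ι : ℝ)⁻¹ * ∑ i, ‖d - A (q + η i)‖ ^ 2 =
      ‖d - A (q + (Fintype.card ι : ℝ)⁻¹ • ∑ j, η j)‖ ^ 2 +
        (Fintype.card ι : ℝ)⁻¹ * ∑ i, ‖A ((Fintype.card ι : ℝ)⁻¹ • ∑ j, η j) - A (η i)‖ ^ 2 := by
  simp only [map_add, map_smul, map_sum, ← sub_sub]
  rw [sum_norm_sub_sq_eq_card_mul_add, mul_add, inv_mul_cancel_left₀ (by positivity)]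

/-- For a linear forward operator, the minimizer set of the multi-sample averaged
quadratic misfit `q ↦ (1/N) ∑ ‖d - A(q + η_s)‖²` equals the minimizer set of the
single misfit at the sample-mean noise `q ↦ ‖d - A(q + η̄)‖²`. -/
theorem stmt0 {m n N : ℕ} (hN : 0 < N)
    (A : EuclideanSpace ℝ (Fin m) →ₗ[ℝ] EuclideanSpace ℝ (Fin n))
    (d : EuclideanSpace ℝ (Fin n)) (η : Fin N → EuclideanSpace ℝ (Fin m)) :
    {q : EuclideanSpace ℝ (Fin m) |
        ∀ q', (N : ℝ)⁻¹ * ∑ s, ‖d - A (q + η s)‖ ^ 2 ≤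
              (N : ℝ)⁻¹ * ∑ s, ‖d - A (q' + η s)‖ ^ 2} =
    {q : EuclideanSpace ℝ (Fin m) |
        ∀ q', ‖d - A (q + (N : ℝ)⁻¹ • ∑ s, η s)‖ ^ 2 ≤
              ‖d - A (q' + (N : ℝ)⁻¹ • ∑ s, η s)‖ ^ 2} := by
  have : Nonempty (Fin N) := ⟨⟨0, hN⟩⟩
  have hmisfit := fun q => inv_card_mul_sum_norm_sub_map_add_sq A d q η
  simp only [Fintype.card_fin] at hmisfit
  exact setOf_forall_le_eq_of_eq_add_const hmisfit
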